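/- For every n ≥ 3 and each pattern p ∈ {(AB)^ω, (BA)^ω, (ABBA)^ω, (BAAB)^ω}, there exists a length-n factor x of the Thue-Morse word whose intertwining sequence I(x) equals p. -/

import Mathlib

/-!
The Thue–Morse morphism `0 ↦ 01, 1 ↦ 10` carries the factor of length `⌈L/2⌉` at `i` onto the
factor of length `L` at `2 i`. For `L ≥ 4` every occurrence of the latter or of its complement
sits at an even position, so the occurrences of the two factors correspond and the intertwining
sequence is preserved. Hence each pattern realised at lengths 3 and 4 is realised at every length
`n ≥ 3`.

The base cases are read off the flips, the positions `s` with `t(s) ≠ t(s+1)`: every even `s` is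
a flip, and `t(s)` is the parity of the number of flips below `s`. The occurrences of `01`/`10`
are exactly the flips, so their labels alternate. The occurrences of `101`/`010` are the pairs
`2s, 2s+1` over the non-flips `s`; these carry opposite letters and `t` alternates along the
non-flips, which gives `ABBA`. Lengths 3 and 4 of the remaining patterns come from lengths 2
and 3 by the morphism again; at length 3 the occurrences are kept at even positions by a
non-flip inside the factor.
-/

open scoped Classical

/-- The Thue-Morse word: parity of the binary digit sum. -/
def tm (n : ℕ) : ℕ := (Nat.digits 2 n).sum % 2

/-- `t[j..j+n-1] = t[i..i+n-1]` : an occurrence at `j` of the factor `t[i..i+n-1]`. -/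
def feq (i j n : ℕ) : Prop := ∀ k < n, tm (j + k) = tm (i + k)

/-- `t[j..j+n-1]` is the binary complement of `t[i..i+n-1]`. -/
def feqc (i j n : ℕ) : Prop := ∀ k < n, tm (j + k) = 1 - tm (i + k)

/-- Positions of occurrences of `x = t[i..i+n-1]` or its complement. -/
def occSet (i n : ℕ) : ℕ → Prop := fun j => feq i j n ∨ feqc i j n

/-- The intertwining sequence of `x = t[i..i+n-1]`: at index `m`, the label of the
`m`-th (in increasing order of position) occurrence of `x` or its complement;
`0` codes `A` (an occurrence of `x`), `1` codes `B` (an occurrence of the complement). -/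
noncomputable def itw (i n m : ℕ) : ℕ :=
  if feq i (Nat.nth (occSet i n) m) n then 0 else 1

/-- The intertwining sequence is `(AB)^ω`. -/
def ABpat (i n : ℕ) : Prop := ∀ m, itw i n m = m % 2

/-- The intertwining sequence is `(BA)^ω`. -/
def BApat (i n : ℕ) : Prop := ∀ m, itw i n m = (m + 1) % 2

/-- The intertwining sequence is `(ABBA)^ω`. -/
def ABBApat (i n : ℕ) : Prop :=
  ∀ m, itw i n m = if m % 4 = 0 ∨ m % 4 = 3 then 0 else 1

/-- The intertwining sequence is `(BAAB)^ω`. -/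
def BAABpat (i n : ℕ) : Prop :=
  ∀ m, itw i n m = if m % 4 = 0 ∨ m % 4 = 3 then 1 else 0

/-- The length-`n` factor of the Thue-Morse word starting at position `i`, as a word. -/
def fac (i n : ℕ) : List ℕ := (List.range n).map (fun k => tm (i + k))

lemma forall_lt_eq_apply_zero_iff {α : Type*} (c : ℕ → α) (n : ℕ) :
    (∀ k < n, c k = c 0) ↔ ∀ k, k + 1 < n → c (k + 1) = c k := by
  refine ⟨fun h k hk => (h (k + 1) hk).trans (h k (by omega)).symm, fun h k hk => ?_⟩
  induction k with
  | zero => rfl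
  | succ k ih => exact (h k hk).trans (ih (by omega))

lemma Nat.count_add_count_not (p : ℕ → Prop) [DecidablePred p] (n : ℕ) :
    Nat.count p n + Nat.count (fun k => ¬ p k) n = n := by
  simp [Nat.count_eq_card_filter_range, Finset.card_filter_add_card_filter_not]

lemma Nat.count_div_two (q : ℕ → Prop) [DecidablePred q] (s : ℕ) :
    Nat.count (fun k => q (k / 2)) (2 * s) = 2 * Nat.count q s := by
  induction s with
  | zero => rfl
  | succ s ih =>
    rw [show 2 * (s + 1) = 2 * s + 1 + 1 by ring, Nat.count_succ, Nat.count_succ, Nat.count_succ,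
      ih, show (2 * s + 1) / 2 = s by omega, show 2 * s / 2 = s by omega]
    split_ifs <;> omega

lemma tm_le_one (n : ℕ) : tm n ≤ 1 :=
  Nat.le_of_lt_succ (Nat.mod_lt _ two_pos)

lemma tm_two_mul (n : ℕ) : tm (2 * n) = tm n := by
  rcases Nat.eq_zero_or_pos n with rfl | hn
  · rfl
  · simp [tm, Nat.digits_def' one_lt_two (by omega : 0 < 2 * n)]

lemma tm_two_mul_add_one (n : ℕ) : tm (2 * n + 1) = 1 - tm n := by
  have h := tm_le_one n
  have h2 : (2 * n + 1) / 2 = n := by omega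
  simp only [tm, Nat.digits_def' one_lt_two (by omega : 0 < 2 * n + 1), List.sum_cons, h2] at h ⊢
  omega

/-- The complement of the period-doubling sequence. -/
def Flip (s : ℕ) : Prop := tm (s + 1) ≠ tm s

lemma flip_two_mul (s : ℕ) : Flip (2 * s) := by
  have := tm_le_one s
  rw [Flip, tm_two_mul_add_one, tm_two_mul]
  omega

lemma flip_two_mul_add_one (s : ℕ) : Flip (2 * s + 1) ↔ ¬Flip s := by
  have := tm_le_one s
  have := tm_le_one (s + 1)
  rw [Flip, Flip, show 2 * s + 1 + 1 = 2 * (s + 1) by ring, tm_two_mul, tm_two_mul_add_one]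
  omega

lemma flip_of_mod_two_eq_zero {s : ℕ} (hs : s % 2 = 0) : Flip s := by
  obtain ⟨t, rfl⟩ : ∃ t, s = 2 * t := ⟨s / 2, by omega⟩
  exact flip_two_mul t

lemma mod_two_eq_one_of_not_flip {s : ℕ} (hs : ¬Flip s) : s % 2 = 1 := by
  by_contra h
  exact hs (flip_of_mod_two_eq_zero (by omega))

lemma tm_eq_count_flip (s : ℕ) : tm s = Nat.count Flip s % 2 := by
  induction s with
  | zero => simp [tm]
  | succ s ih =>
    have := tm_le_one s
    have := tm_le_one (s + 1)
    rw [Nat.count_succ]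
    by_cases h : Flip s
    · rw [if_pos h]; unfold Flip at h; omega
    · rw [if_neg h]; unfold Flip at h; omega

lemma flip_iff_flip (a b : ℕ) :
    (Flip a ↔ Flip b) ↔ (tm (a + 1) + tm (b + 1)) % 2 = (tm a + tm b) % 2 := by
  have := tm_le_one a; have := tm_le_one b; have := tm_le_one (a + 1); have := tm_le_one (b + 1)
  unfold Flip
  omega

lemma occSet_iff_sum_mod_two {i n j : ℕ} :
    occSet i n j ↔ ∀ k < n, (tm (j + k) + tm (i + k)) % 2 = (tm j + tm i) % 2 := by
  have hb := tm_le_one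
  constructor
  · rintro (h | h) k hk
    all_goals
      have := h k hk; have := h 0 (by omega); have := hb (i + k); have := hb i
      simp only [add_zero] at *
      omega
  · intro h
    by_cases h0 : tm j = tm i
    · exact Or.inl fun k hk => by have := h k hk; have := hb (j + k); have := hb (i + k); omega
    · refine Or.inr fun k hk => ?_
      have := h k hk; have := hb (j + k); have := hb (i + k); have := hb j; have := hb i
      omega

lemma occSet_iff {i n j : ℕ} :
    occSet i n j ↔ ∀ k, k + 1 < n → (Flip (j + k) ↔ Flip (i + k)) := by
  have := forall_lt_eq_apply_zero_iff (fun k => (tm (j + k) + tm (i + k)) % 2) n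
  simp only [add_zero] at this
  simp only [occSet_iff_sum_mod_two, this, flip_iff_flip, add_assoc]

lemma feq_iff_of_occSet {i n j : ℕ} (hn : 0 < n) (h : occSet i n j) :
    feq i j n ↔ tm j = tm i := by
  have := tm_le_one i
  refine ⟨fun h' => by simpa using h' 0 hn, fun h0 => h.resolve_right fun hc => ?_⟩
  have := hc 0 hn
  simp only [add_zero] at this
  omega

lemma not_flip_and_flip_add_two {p : ℕ} (hp : p % 2 = 1) : ¬(Flip p ∧ Flip (p + 2)) := by
  obtain ⟨s, rfl⟩ : ∃ s, p = 2 * s + 1 := ⟨p / 2, by omega⟩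
  rw [show 2 * s + 1 + 2 = 2 * (s + 1) + 1 by ring, flip_two_mul_add_one, flip_two_mul_add_one]
  rintro ⟨h, h'⟩
  have := mod_two_eq_one_of_not_flip h
  have := mod_two_eq_one_of_not_flip h'
  omega

lemma mod_two_eq_of_occSet_of_not_flip {i L j k : ℕ} (hk : k + 1 < L) (hi : ¬Flip (i + k))
    (h : occSet i L j) : j % 2 = i % 2 := by
  have hj : ¬Flip (j + k) := fun hj => hi ((occSet_iff.1 h k hk).1 hj)
  have := mod_two_eq_one_of_not_flip hi
  have := mod_two_eq_one_of_not_flip hj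
  omega

lemma mod_two_eq_of_occSet {i L j : ℕ} (hL : 4 ≤ L) (h : occSet i L j) : j % 2 = i % 2 := by
  have h0 := occSet_iff.1 h 0 (by omega)
  have h2 := occSet_iff.1 h 2 (by omega)
  by_contra hne
  rcases Nat.mod_two_eq_zero_or_one i with hi | hi
  · exact not_flip_and_flip_add_two (p := j) (by omega)
      ⟨h0.2 (flip_of_mod_two_eq_zero (by omega)), h2.2 (flip_of_mod_two_eq_zero (by omega))⟩
  · exact not_flip_and_flip_add_two hi
      ⟨h0.1 (flip_of_mod_two_eq_zero (by omega)), h2.1 (flip_of_mod_two_eq_zero (by omega))⟩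

lemma occSet_two_mul_add_iff {i L j r : ℕ} (hr : r < 2) :
    occSet (2 * i + r) L (2 * j + r) ↔ occSet i ((L + r + 1) / 2) j := by
  have flip_odd (x a : ℕ) : Flip (2 * x + r + (2 * a + 1 - r)) ↔ ¬Flip (x + a) := by
    rw [show 2 * x + r + (2 * a + 1 - r) = 2 * (x + a) + 1 by omega, flip_two_mul_add_one]
  rw [occSet_iff, occSet_iff]
  constructor
  · intro h a ha
    simpa only [flip_odd, not_iff_not] using h (2 * a + 1 - r) (by omega)
  · intro h k hk
    rcases Nat.mod_two_eq_zero_or_one (r + k) with he | ho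
    · exact iff_of_true (flip_of_mod_two_eq_zero (by omega)) (flip_of_mod_two_eq_zero (by omega))
    · obtain ⟨a, rfl⟩ : ∃ a, k = 2 * a + 1 - r := ⟨(r + k) / 2, by omega⟩
      simpa only [flip_odd, not_iff_not] using h a (by omega)

lemma tm_two_mul_add_eq_iff {i j r : ℕ} (hr : r < 2) :
    tm (2 * j + r) = tm (2 * i + r) ↔ tm j = tm i := by
  have := tm_le_one i
  have := tm_le_one j
  interval_cases r
  · simp only [add_zero, tm_two_mul]
  · rw [tm_two_mul_add_one, tm_two_mul_add_one]
    omega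

/-- Infinitude of the occurrence set keeps `Nat.nth` away from its junk value `0`. -/
def HasItw (g : ℕ → ℕ) (i n : ℕ) : Prop :=
  {j | occSet i n j}.Infinite ∧ ∀ m, itw i n m = g m

/-- The factor of length `L` at `2 i + r` is cut from the image of the factor of length
`(L + r + 1) / 2` at `i` under `0 ↦ 01, 1 ↦ 10`. Once all its occurrences have the parity of
`r`, they are exactly the images of the occurrences of the latter. -/
lemma HasItw.two_mul_add {g : ℕ → ℕ} {i L r : ℕ} (h : HasItw g i ((L + r + 1) / 2))
    (hr : r < 2) (hL : 0 < L) (hsync : ∀ j, occSet (2 * i + r) L j → j % 2 = r) :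
    HasItw g (2 * i + r) L := by
  obtain ⟨hinf, hg⟩ := h
  set L' := (L + r + 1) / 2
  set f : ℕ → ℕ := fun s => 2 * s + r
  have hf : StrictMono f := fun a b hab => by simp only [f]; omega
  have hcomp : (fun s => occSet (2 * i + r) L (f s)) = occSet i L' :=
    funext fun s => propext (occSet_two_mul_add_iff hr)
  have hrange (j : ℕ) (hj : occSet (2 * i + r) L j) : j ∈ Set.range f :=
    ⟨j / 2, by have := hsync j hj; simp only [f]; omega⟩
  have hinf' : {j | occSet (2 * i + r) L j}.Infinite := by
    refine (hinf.image hf.injective.injOn).mono ?_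
    rintro _ ⟨s, hs, rfl⟩
    exact (occSet_two_mul_add_iff hr).2 hs
  refine ⟨hinf', fun m => ?_⟩
  have hnth : Nat.nth (occSet (2 * i + r) L) m = f (Nat.nth (occSet i L') m) := by
    rw [← hcomp]
    exact (Nat.nth_comp_of_strictMono hf hrange fun hfin => absurd hfin hinf').symm
  have hmem := Nat.nth_mem_of_infinite hinf m
  rw [← hg m, itw, itw, hnth]
  refine if_congr ?_ rfl rfl
  rw [feq_iff_of_occSet hL ((occSet_two_mul_add_iff hr).2 hmem),
    feq_iff_of_occSet (by omega) hmem]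
  exact tm_two_mul_add_eq_iff hr

lemma HasItw.two_mul {g : ℕ → ℕ} {i L : ℕ} (h : HasItw g i ((L + 1) / 2)) (hL : 4 ≤ L) :
    HasItw g (2 * i) L :=
  h.two_mul_add (r := 0) zero_lt_two (by omega) fun _ hj => by
    simpa using mod_two_eq_of_occSet hL hj

lemma HasItw.two_mul_add_one {g : ℕ → ℕ} {i L : ℕ} (h : HasItw g i (L / 2 + 1)) (hL : 4 ≤ L) :
    HasItw g (2 * i + 1) L :=
  HasItw.two_mul_add (r := 1) (by rwa [show (L + 1 + 1) / 2 = L / 2 + 1 by omega]) one_lt_two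
    (by omega) fun _ hj => by simpa using mod_two_eq_of_occSet hL hj

lemma exists_hasItw_of_three_of_four {g : ℕ → ℕ} (h3 : ∃ i, HasItw g i 3)
    (h4 : ∃ i, HasItw g i 4) (n : ℕ) (hn : 3 ≤ n) : ∃ i, HasItw g i n := by
  induction n using Nat.strong_induction_on with
  | _ n ih =>
    rcases (show n = 3 ∨ n = 4 ∨ 5 ≤ n by omega) with rfl | rfl | h5
    · exact h3
    · exact h4
    · obtain ⟨i, hi⟩ := ih ((n + 1) / 2) (by omega) (by omega)
      exact ⟨2 * i, hi.two_mul (by omega)⟩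

lemma hasItw_of_occSet_eq {g : ℕ → ℕ} {i n : ℕ} {q : ℕ → Prop} [DecidablePred q] (hn : 0 < n)
    (hq : occSet i n = q) (hinf : {j | q j}.Infinite)
    (hlabel : ∀ j, q j → (if tm j = tm i then 0 else 1) = g (Nat.count q j)) :
    HasItw g i n := by
  subst hq
  refine ⟨hinf, fun m => ?_⟩
  have hmem := Nat.nth_mem_of_infinite hinf m
  rw [itw, if_congr (feq_iff_of_occSet hn hmem) rfl rfl, hlabel _ hmem,
    Nat.count_nth_of_infinite hinf]

lemma not_flip_one : ¬Flip 1 := by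
  norm_num [Flip, tm]

lemma infinite_flip : {s | Flip s}.Infinite :=
  Set.infinite_of_injective_forall_mem (f := (2 * ·)) (fun a b h => by simpa using h) flip_two_mul

lemma occSet_two_eq_flip {i : ℕ} (hi : Flip i) : occSet i 2 = Flip := by
  refine funext fun j => propext ⟨fun h => ?_, fun hj => occSet_iff.2 fun k hk => ?_⟩
  · simpa using (occSet_iff.1 h 0 one_lt_two).2 (by simpa using hi)
  · obtain rfl : k = 0 := by omega
    simpa using iff_of_true hj hi

lemma hasItw_ab_two : HasItw (· % 2) 0 2 :=
  hasItw_of_occSet_eq two_pos (occSet_two_eq_flip (flip_two_mul 0)) infinite_flip fun j _ => by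
    have := tm_eq_count_flip j
    rw [show tm 0 = 0 by norm_num [tm]]
    split_ifs <;> omega

lemma hasItw_ba_two : HasItw (fun m => (m + 1) % 2) 2 2 :=
  hasItw_of_occSet_eq two_pos (occSet_two_eq_flip (flip_two_mul 1)) infinite_flip fun j _ => by
    have := tm_eq_count_flip j
    have := tm_le_one j
    rw [show tm 2 = 1 by norm_num [tm]]
    split_ifs <;> omega

lemma flip_and_flip_add_one_iff (j : ℕ) : Flip j ∧ Flip (j + 1) ↔ ¬Flip (j / 2) := by
  rcases Nat.mod_two_eq_zero_or_one j with he | ho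
  · obtain ⟨s, rfl⟩ : ∃ s, j = 2 * s := ⟨j / 2, by omega⟩
    rw [flip_two_mul_add_one, show 2 * s / 2 = s by omega]
    exact and_iff_right (flip_two_mul s)
  · obtain ⟨s, rfl⟩ : ∃ s, j = 2 * s + 1 := ⟨j / 2, by omega⟩
    rw [flip_two_mul_add_one, show 2 * s + 1 + 1 = 2 * (s + 1) by ring,
      show (2 * s + 1) / 2 = s by omega]
    exact and_iff_left (flip_two_mul (s + 1))

lemma occSet_three_eq {i : ℕ} (hi : Flip i) (hi' : Flip (i + 1)) :
    occSet i 3 = fun j => ¬Flip (j / 2) := by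
  refine funext fun j => propext ?_
  rw [occSet_iff, ← flip_and_flip_add_one_iff]
  refine ⟨fun h => ⟨(h 0 (by norm_num)).2 hi, (h 1 (by norm_num)).2 hi'⟩, fun h k hk => ?_⟩
  rcases (show k = 0 ∨ k = 1 by omega) with rfl | rfl
  · exact iff_of_true h.1 hi
  · exact iff_of_true h.2 hi'

lemma infinite_not_flip_div_two : {j | ¬Flip (j / 2)}.Infinite := by
  refine Set.infinite_of_injective_forall_mem (f := fun u => 8 * u + 2)
    (fun a b h => by simpa using h) fun u => ?_
  rw [Set.mem_ofPred_eq, show (8 * u + 2) / 2 = 2 * (2 * u) + 1 by omega, flip_two_mul_add_one,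
    not_not]
  exact flip_two_mul u

/-- The non-flips are odd, so by `tm_eq_count_flip` the letter alternates along them. -/
lemma tm_eq_one_iff_of_not_flip_div_two {j : ℕ} (hj : ¬Flip (j / 2)) :
    tm j = 1 ↔ Nat.count (fun k => ¬Flip (k / 2)) j % 4 = 0 ∨
      Nat.count (fun k => ¬Flip (k / 2)) j % 4 = 3 := by
  set s := j / 2
  have hs := mod_two_eq_one_of_not_flip hj
  have htm := tm_eq_count_flip s
  have hsum := Nat.count_add_count_not Flip s
  have := tm_le_one s
  rcases Nat.mod_two_eq_zero_or_one j with he | ho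
  · rw [show j = 2 * s by omega, Nat.count_div_two (fun s => ¬Flip s), tm_two_mul]
    omega
  · rw [show j = 2 * s + 1 by omega, Nat.count_succ, Nat.count_div_two (fun s => ¬Flip s),
      tm_two_mul_add_one, show 2 * s / 2 = s by omega, if_pos hj]
    omega

lemma hasItw_abba_three : HasItw (fun m => if m % 4 = 0 ∨ m % 4 = 3 then 0 else 1) 2 3 :=
  hasItw_of_occSet_eq (by norm_num) (occSet_three_eq (flip_two_mul 1)
    ((flip_two_mul_add_one 1).2 not_flip_one)) infinite_not_flip_div_two fun j hj => by
    rw [show tm 2 = 1 by norm_num [tm]]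
    exact if_congr (tm_eq_one_iff_of_not_flip_div_two hj) rfl rfl

lemma hasItw_baab_three : HasItw (fun m => if m % 4 = 0 ∨ m % 4 = 3 then 1 else 0) 3 3 :=
  hasItw_of_occSet_eq (by norm_num) (occSet_three_eq ((flip_two_mul_add_one 1).2 not_flip_one)
    (flip_two_mul 2)) infinite_not_flip_div_two fun j hj => by
    have := tm_eq_one_iff_of_not_flip_div_two hj
    have := tm_le_one j
    rw [show tm 3 = 0 by norm_num [tm]]
    split_ifs <;> omega

lemma hasItw_ab_three : HasItw (· % 2) 0 3 :=
  hasItw_ab_two.two_mul_add (i := 0) (L := 3) (r := 0) two_pos (by norm_num) fun _ hj =>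
    mod_two_eq_of_occSet_of_not_flip (k := 1) (by norm_num) not_flip_one hj

lemma hasItw_ba_three : HasItw (fun m => (m + 1) % 2) 4 3 :=
  hasItw_ba_two.two_mul_add (i := 2) (L := 3) (r := 0) two_pos (by norm_num) fun _ hj =>
    mod_two_eq_of_occSet_of_not_flip (k := 1) (by norm_num)
      ((flip_two_mul_add_one 2).not.2 (not_not.2 (flip_two_mul 1))) hj

/-- For every n ≥ 3, each of the four patterns (AB)^ω, (BA)^ω, (ABBA)^ω,
(BAAB)^ω is the intertwining sequence of some length-n factor. -/
theorem tm_all_patterns_occur (n : ℕ) (hn : 3 ≤ n) :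
    (∃ i, ABpat i n) ∧ (∃ j, BApat j n) ∧ (∃ k, ABBApat k n) ∧ (∃ l, BAABpat l n) := by
  have exists_itw {g : ℕ → ℕ} (h3 : ∃ i, HasItw g i 3) (h4 : ∃ i, HasItw g i 4) :
      ∃ i, ∀ m, itw i n m = g m :=
    (exists_hasItw_of_three_of_four h3 h4 n hn).imp fun _ h => h.2
  exact ⟨exists_itw ⟨0, hasItw_ab_three⟩ ⟨0, hasItw_ab_two.two_mul (L := 4) le_rfl⟩,
    exists_itw ⟨4, hasItw_ba_three⟩ ⟨4, hasItw_ba_two.two_mul (L := 4) le_rfl⟩,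
    exists_itw ⟨2, hasItw_abba_three⟩ ⟨5, hasItw_abba_three.two_mul_add_one (L := 4) le_rfl⟩,
    exists_itw ⟨3, hasItw_baab_three⟩ ⟨7, hasItw_baab_three.two_mul_add_one (L := 4) le_rfl⟩⟩
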